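/- Focusing completeness: for any derivation f of a sequent S ∣ Γ ⟶ C in the skew monoidal sequent calculus, there is a focused derivation focus f of S ∣ Γ ⟶_L C in the focused sequent calculus. -/

import Mathlib

set_option linter.unusedVariables false
inductive Fma (V : Type) : Type
  | var : V → Fma V
  | unit : Fma V
  | tens : Fma V → Fma V → Fma V

abbrev Stp (V : Type) := Option (Fma V)

def stpF {V : Type} : Stp V → Fma V
  | none => Fma.unit
  | some A => A

def semF {V : Type} : Fma V → List (Fma V) → Fma V
  | A, [] => A
  | A, B :: Γ => semF (A.tens B) Γ

abbrev sem {V : Type} (S : Stp V) (Γ : List (Fma V)) : Fma V := semF (stpF S) Γ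

theorem semF_append {V : Type} (A : Fma V) (Γ Δ : List (Fma V)) :
    semF A (Γ ++ Δ) = semF (semF A Γ) Δ := by
  induction Γ generalizing A with
  | nil => rfl
  | cons B Γ ih => exact ih _

/-- The skew monoidal sequent calculus (with the two cut rules). -/
inductive SeqD {V : Type} : Stp V → List (Fma V) → Fma V → Type
  | ax : SeqD (some A) [] A
  | uf : SeqD (some A) Γ C → SeqD none (A :: Γ) C
  | Il : SeqD none Γ C → SeqD (some Fma.unit) Γ C
  | Ir : SeqD none [] Fma.unit
  | tl : SeqD (some A) (B :: Γ) C → SeqD (some (Fma.tens A B)) Γ C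
  | tr : SeqD S Γ A → SeqD none Δ B → SeqD S (Γ ++ Δ) (Fma.tens A B)
  | scut : SeqD S Γ A → SeqD (some A) Δ C → SeqD S (Γ ++ Δ) C
  | ccut : SeqD none Γ A → SeqD S (Δ₀ ++ A :: Δ₁) C → SeqD S ((Δ₀ ++ Γ) ++ Δ₁) C

mutual
inductive FocL {V : Type} : Stp V → List (Fma V) → Fma V → Type
  | uf : FocL (some A) Γ C → FocL none (A :: Γ) C
  | Il : FocL none Γ C → FocL (some Fma.unit) Γ C
  | tl : FocL (some A) (B :: Γ) C → FocL (some (Fma.tens A B)) Γ C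
  | sw : FocR T Γ C → FocL T Γ C

inductive FocR {V : Type} : Stp V → List (Fma V) → Fma V → Type
  | ax : FocR (some (Fma.var X)) [] (Fma.var X)
  | Ir : FocR none [] Fma.unit
  | tr : FocR T Γ A → FocL none Δ B → FocR T (Γ ++ Δ) (Fma.tens A B)
end


/-! Both cut rules are admissible, by induction on the cut formula `A`. A stoup cut permutes
past the left rules of its first premise; in the principal case `A = A₁ ⊗ A₂` it becomes a stoup
cut on `A₁` followed by a context cut on `A₂`. A context cut permutes up its second premise until
`A` is the formula moved into the stoup by `uf`, where it becomes a stoup cut on the same `A`; so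
context cuts on `A` need only stoup cuts on `A`, and the induction closes. -/

section

variable {V : Type}

namespace FocL

def tr {S : Stp V} {Γ Δ : List (Fma V)} {A B : Fma V} :
    FocL S Γ A → FocL none Δ B → FocL S (Γ ++ Δ) (Fma.tens A B)
  | uf f, g => uf (tr f g)
  | Il f, g => Il (tr f g)
  | tl f, g => tl (tr f g)
  | sw r, g => sw (FocR.tr r g)

def ax : (A : Fma V) → FocL (some A) [] A
  | Fma.var _ => sw FocR.ax
  | Fma.unit => Il (sw FocR.Ir)
  | Fma.tens A B => tl (tr (ax A) (uf (ax B)))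

end FocL

theorem FocR.exists_eq_var {A : Fma V} {Γ : List (Fma V)} {C : Fma V} :
    FocR (some A) Γ C → ∃ X, A = Fma.var X
  | ax => ⟨_, rfl⟩
  | tr r _ => r.exists_eq_var

theorem List.append_eq_append_cons {α : Type*} {Γ Δ Δ₀ Δ₁ : List α} {a : α}
    (h : Γ ++ Δ = Δ₀ ++ a :: Δ₁) :
    (∃ l, Γ = Δ₀ ++ a :: l ∧ Δ₁ = l ++ Δ) ∨ (∃ l, Δ₀ = Γ ++ l ∧ Δ = l ++ a :: Δ₁) := by
  rcases List.append_eq_append_iff.mp h with ⟨l, hΔ₀, hΔ⟩ | ⟨l, hΓ, hl⟩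
  · exact .inr ⟨l, hΔ₀, hΔ⟩
  · rcases List.cons_eq_append_iff.mp hl with ⟨rfl, hΔ⟩ | ⟨l', rfl, hΔ₁⟩
    · exact .inr ⟨[], by simpa using hΓ.symm, hΔ⟩
    · exact .inl ⟨l', hΓ, hΔ₁⟩

def ScutAdmissible (A : Fma V) : Prop :=
  ∀ ⦃S : Stp V⦄ ⦃Γ Δ : List (Fma V)⦄ ⦃C : Fma V⦄,
    FocL S Γ A → FocL (some A) Δ C → Nonempty (FocL S (Γ ++ Δ) C)

def CcutAdmissible (A : Fma V) : Prop :=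
  ∀ ⦃S : Stp V⦄ ⦃Γ Δ₀ Δ₁ : List (Fma V)⦄ ⦃C : Fma V⦄,
    FocL none Γ A → FocL S (Δ₀ ++ A :: Δ₁) C → Nonempty (FocL S (Δ₀ ++ Γ ++ Δ₁) C)

theorem ScutAdmissible.of_sw {A : Fma V}
    (h : ∀ {T : Stp V} {Γ Δ : List (Fma V)} {C : Fma V},
      FocR T Γ A → FocL (some A) Δ C → Nonempty (FocL T (Γ ++ Δ) C)) :
    ScutAdmissible A
  | _, _, _, _, .uf f, g => (of_sw h f g).map FocL.uf
  | _, _, _, _, .Il f, g => (of_sw h f g).map FocL.Il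
  | _, _, _, _, .tl f, g => (of_sw h f g).map FocL.tl
  | _, _, _, _, .sw r, g => h r g

theorem scutAdmissible_var (X : V) : ScutAdmissible (Fma.var X) :=
  ScutAdmissible.of_sw fun r g => by
    cases r
    exact ⟨g⟩

theorem scutAdmissible_unit : ScutAdmissible (Fma.unit : Fma V) :=
  ScutAdmissible.of_sw fun r g => by
    cases r
    cases g with
    | Il g => exact ⟨g⟩
    | sw r => exact absurd r.exists_eq_var (by simp)

theorem scutAdmissible_tens {A B : Fma V} (hA : ScutAdmissible A) (hB : CcutAdmissible B) :
    ScutAdmissible (Fma.tens A B) :=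
  ScutAdmissible.of_sw fun r g => by
    cases r with | tr r₁ g₂ => ?_
    cases g with
    | tl g =>
      obtain ⟨h⟩ := hA (.sw r₁) g
      simpa only [List.append_assoc] using hB g₂ h
    | sw r => exact absurd r.exists_eq_var (by simp)

mutual

theorem FocL.ccut {A : Fma V} (hA : ScutAdmissible A) {Γ : List (Fma V)} (f : FocL none Γ A) :
    ∀ {S : Stp V} {Λ Δ₀ Δ₁ : List (Fma V)} {C : Fma V}, FocL S Λ C → Λ = Δ₀ ++ A :: Δ₁ →
      Nonempty (FocL S (Δ₀ ++ Γ ++ Δ₁) C)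
  | _, _, [], _, _, .uf g, hΛ => by
    obtain ⟨rfl, rfl⟩ := List.cons_eq_cons.mp hΛ
    exact hA f g
  | _, _, _ :: Δ₀, _, _, .uf g, hΛ => by
    rw [List.cons_append, List.cons_eq_cons] at hΛ
    obtain ⟨rfl, hΛ⟩ := hΛ
    exact (f.ccut hA g hΛ).map FocL.uf
  | _, _, _, _, _, .Il g, hΛ => (f.ccut hA g hΛ).map FocL.Il
  | _, _, Δ₀, _, _, .tl (B := B) g, hΛ =>
    (f.ccut hA g (Δ₀ := B :: Δ₀) (by rw [hΛ]; rfl)).map FocL.tl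
  | _, _, _, _, _, .sw r, hΛ => FocR.ccut hA f r hΛ

theorem FocR.ccut {A : Fma V} (hA : ScutAdmissible A) {Γ : List (Fma V)} (f : FocL none Γ A) :
    ∀ {T : Stp V} {Λ Δ₀ Δ₁ : List (Fma V)} {C : Fma V}, FocR T Λ C → Λ = Δ₀ ++ A :: Δ₁ →
      Nonempty (FocL T (Δ₀ ++ Γ ++ Δ₁) C)
  | _, _, _, _, _, .ax, hΛ => by simp at hΛ
  | _, _, _, _, _, .Ir, hΛ => by simp at hΛ
  | _, _, _, _, _, .tr r g, hΛ => by
    rcases List.append_eq_append_cons hΛ with ⟨l, hr, rfl⟩ | ⟨l, rfl, hg⟩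
    · obtain ⟨h⟩ := FocR.ccut hA f r hr
      simpa only [List.append_assoc] using Nonempty.intro (h.tr g)
    · obtain ⟨h⟩ := f.ccut hA g hg
      simpa only [List.append_assoc] using Nonempty.intro ((FocL.sw r).tr h)

end

theorem ccutAdmissible_of_scutAdmissible {A : Fma V} (hA : ScutAdmissible A) :
    CcutAdmissible A :=
  fun _ _ _ _ _ f g => f.ccut hA g rfl

theorem scutAdmissible : ∀ A : Fma V, ScutAdmissible A
  | .var X => scutAdmissible_var X
  | .unit => scutAdmissible_unit
  | .tens A B =>
    scutAdmissible_tens (scutAdmissible A) (ccutAdmissible_of_scutAdmissible (scutAdmissible B))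

theorem ccutAdmissible (A : Fma V) : CcutAdmissible A :=
  ccutAdmissible_of_scutAdmissible (scutAdmissible A)

end

/-- Focusing completeness: every derivation of `S ∣ Γ ⟶ C` in the skew monoidal
sequent calculus yields a focused derivation of `S ∣ Γ ⟶_L C`. -/
theorem statement14 (V : Type) (S : Stp V) (Γ : List (Fma V)) (C : Fma V)
    (f : SeqD S Γ C) : Nonempty (FocL S Γ C) := by
  induction f with
  | ax => exact ⟨FocL.ax _⟩
  | uf _ ih => exact ih.map FocL.uf
  | Il _ ih => exact ih.map FocL.Il
  | Ir => exact ⟨FocL.sw FocR.Ir⟩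
  | tl _ ih => exact ih.map FocL.tl
  | tr _ _ ih₁ ih₂ => exact ih₁.elim fun f => ih₂.map f.tr
  | scut _ _ ih₁ ih₂ => exact ih₁.elim fun f => ih₂.elim fun g => scutAdmissible _ f g
  | ccut _ _ ih₁ ih₂ => exact ih₁.elim fun f => ih₂.elim fun g => ccutAdmissible _ f g
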